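/- In the CPL configuration with conditional prior g(s_{1:t}) = s_t μ₀ + (1-s_t) μ_{(s_{1:t-1})}, G(s_{1:t}) = s_t Σ₀ + (1-s_t) Σ_{(s_{1:t-1})}, the conditional posterior (μ_{(s_{1:t})}, Σ_{(s_{1:t})}) is a function only of (ℓ(s_{1:t}), y_{ℓ(s_{1:t})},…,y_t), where ℓ(s_{1:t}) is the largest index i ≤ t with s_i = 1 (or 1 if no such index). In particular, any two sequences with the same most recent changepoint time give identical conditional posteriors. -/
import Mathlib


open Matrix Finset

/-- One conjugate Gaussian update. -/
noncomputable def conjUpdate {d : ℕ} (L : Matrix (Fin d) (Fin d) ℝ)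
    (p : (Fin d → ℝ) × Matrix (Fin d) (Fin d) ℝ) (y : Fin d → ℝ) :
    (Fin d → ℝ) × Matrix (Fin d) (Fin d) ℝ :=
  ((p.2⁻¹ + L⁻¹)⁻¹ *ᵥ (p.2⁻¹ *ᵥ p.1 + L⁻¹ *ᵥ y), (p.2⁻¹ + L⁻¹)⁻¹)

/-- CPL conditional posterior at time `n` (steps indexed `1, …, n`): at a step with
`s i = true` the conditional prior resets to `base`, otherwise it continues from the
previous conditional posterior; then `y i` is incorporated. -/
noncomputable def cplPost {d : ℕ} (L : Matrix (Fin d) (Fin d) ℝ)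
    (base : (Fin d → ℝ) × Matrix (Fin d) (Fin d) ℝ)
    (s : ℕ → Bool) (y : ℕ → Fin d → ℝ) : ℕ → (Fin d → ℝ) × Matrix (Fin d) (Fin d) ℝ
  | 0 => base
  | n + 1 => conjUpdate L (if s (n + 1) then base else cplPost L base s y n) (y (n + 1))

/-- Most recent changepoint time: the largest `i ≤ t` with `s i = true`, or `1` if
there is no such index. -/
def mrcN (s : ℕ → Bool) (t : ℕ) : ℕ :=
  max 1 (((Finset.Icc 1 t).filter fun i => s i).sup id)

noncomputable def runFrom {d : ℕ} (L : Matrix (Fin d) (Fin d) ℝ)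
    (base : (Fin d → ℝ) × Matrix (Fin d) (Fin d) ℝ)
    (y : ℕ → Fin d → ℝ) (ℓ : ℕ) : ℕ → (Fin d → ℝ) × Matrix (Fin d) (Fin d) ℝ
  | 0 => base
  | n + 1 => if n + 1 < ℓ then base
             else conjUpdate L (runFrom L base y ℓ n) (y (n + 1))

lemma runFrom_of_lt {d : ℕ} (L : Matrix (Fin d) (Fin d) ℝ)
    (base : (Fin d → ℝ) × Matrix (Fin d) (Fin d) ℝ)
    (y : ℕ → Fin d → ℝ) {ℓ n : ℕ} (h : n < ℓ) :
    runFrom L base y ℓ n = base := by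
  cases n with
  | zero => rfl
  | succ m => simp [runFrom, h]

lemma runFrom_congr {d : ℕ} (L : Matrix (Fin d) (Fin d) ℝ)
    (base : (Fin d → ℝ) × Matrix (Fin d) (Fin d) ℝ)
    (y y' : ℕ → Fin d → ℝ) (ℓ n : ℕ)
    (hy : ∀ i, ℓ ≤ i → i ≤ n → y i = y' i) :
    runFrom L base y ℓ n = runFrom L base y' ℓ n := by
  induction n with
  | zero => rfl
  | succ m ih =>
    by_cases h : m + 1 < ℓ
    · simp [runFrom, h]
    · have h1 : ℓ ≤ m + 1 := Nat.le_of_not_lt h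
      rw [runFrom, runFrom, if_neg h, if_neg h,
        ih (fun i hi hi' => hy i hi (Nat.le_succ_of_le hi')),
        hy (m + 1) h1 le_rfl]

lemma mrcN_le (s : ℕ → Bool) (t : ℕ) : mrcN s t ≤ max 1 t := by
  unfold mrcN
  refine max_le (le_max_left _ _) (le_max_of_le_right ?_)
  refine Finset.sup_le fun i hi => ?_
  simp only [Finset.mem_filter, Finset.mem_Icc] at hi
  exact hi.1.2

lemma cplPost_eq_runFrom {d : ℕ} (L : Matrix (Fin d) (Fin d) ℝ)
    (base : (Fin d → ℝ) × Matrix (Fin d) (Fin d) ℝ)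
    (s : ℕ → Bool) (y : ℕ → Fin d → ℝ) (t : ℕ) :
    cplPost L base s y t = runFrom L base y (mrcN s t) t := by
  induction t with
  | zero => rfl
  | succ n ih =>
    by_cases hs : s (n + 1)
    · have hm : mrcN s (n + 1) = n + 1 := by
        have h1 : n + 1 ∈ (Finset.Icc 1 (n + 1)).filter fun i => s i := by
          simp [hs]
        have h2 : ((Finset.Icc 1 (n + 1)).filter fun i => s i).sup id = n + 1 := by
          refine le_antisymm ?_ (Finset.le_sup (f := id) h1)
          refine Finset.sup_le fun i hi => ?_
          simp only [Finset.mem_filter, Finset.mem_Icc] at hi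
          exact hi.1.2
        simp [mrcN, h2]
      rw [hm, cplPost, if_pos hs, runFrom, if_neg (lt_irrefl _),
        runFrom_of_lt L base y (Nat.lt_succ_self n)]
    · have hm : mrcN s (n + 1) = mrcN s n := by
        have : (Finset.Icc 1 (n + 1)).filter (fun i => s i)
            = (Finset.Icc 1 n).filter fun i => s i := by
          ext i
          simp only [Finset.mem_filter, Finset.mem_Icc]
          constructor
          · rintro ⟨⟨h1, h2⟩, h3⟩
            refine ⟨⟨h1, ?_⟩, h3⟩
            rcases Nat.lt_or_ge i (n + 1) with h | h
            · omega
            · have : i = n + 1 := by omega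
              subst this; simp [hs] at h3
          · rintro ⟨⟨h1, h2⟩, h3⟩
            exact ⟨⟨h1, Nat.le_succ_of_le h2⟩, h3⟩
        simp [mrcN, this]
      have hle : ¬ (n + 1 < mrcN s (n + 1)) := by
        have := mrcN_le s (n + 1); omega
      rw [hm] at hle ⊢
      rw [cplPost, if_neg (by simp [hs]), runFrom, if_neg hle, ih]

/-- The CPL conditional posterior is a function only of the most recent changepoint
time `ℓ(s_{1:t})` and the observations `y ℓ, …, y t`: any two changepoint sequences
with the same most recent changepoint time (and the same observations from that time
on) give identical conditional posteriors. -/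
theorem cpl_posterior_depends_only_on_mrc {d : ℕ} (t : ℕ)
    (Λ S0 : Matrix (Fin d) (Fin d) ℝ) (hΛ : Λ.PosDef) (hS0 : S0.PosDef)
    (μ₀ : Fin d → ℝ) (s s' : ℕ → Bool) (y y' : ℕ → Fin d → ℝ)
    (hmrc : mrcN s t = mrcN s' t)
    (hy : ∀ i, mrcN s t ≤ i → i ≤ t → y i = y' i) :
    cplPost Λ (μ₀, S0) s y t = cplPost Λ (μ₀, S0) s' y' t := by
  rw [cplPost_eq_runFrom, cplPost_eq_runFrom, hmrc]
  exact runFrom_congr _ _ _ _ _ _ (fun i hi hi' => hy i (hmrc ▸ hi) hi')
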